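/- Let S ⊆ C be a set of configurations such that for every c ∈ S there exist a rule ρ with conclusion configuration c, premises j_1,…,j_n, and an index i ∈ 1..n such that j_k is inductively derivable for all k < i and the configuration of j_i belongs to S. Then for every c ∈ S there exists an infinite trace σ^∞ such that c ⇒ σ^∞ is coinductively derivable in the trace-extended rules. -/

import Mathlib

/-- Judgements over configurations `C` and extended results `Option R`
    (`none` stands for the special extra result such as `?`, `wrong`, or `∞`). -/
abbrev Judg (C R : Type) := C × Option R

/-- Lift a complete judgement to an extended judgement. -/
def liftJ {C R : Type} (j : C × R) : Judg C R := (j.1, some j.2)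

/-- Bounded-premises condition. -/
def BP {C R : Type} (Rules : Set (List (C × R) × (C × R))) : Prop :=
  ∀ c : C, ∃ b : ℕ, ∀ js res, (js, (c, res)) ∈ Rules → js.length ≤ b

/-- The extended rule set `Rules_?`: original rules (lifted), start axioms
    `c ⇒ ?`, and partial rules. -/
def RulesQ {C R : Type} (Rules : Set (List (C × R) × (C × R))) :
    Set (List (Judg C R) × Judg C R) :=
  { r | (∃ c : C, r = ([], (c, none)))
      ∨ (∃ (js : List (C × R)) (c : C) (res : R), (js, (c, res)) ∈ Rules ∧ r = (js.map liftJ, (c, some res)))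
      ∨ (∃ (js : List (C × R)) (c : C) (res : R) (i : ℕ) (hi : i < js.length) (u : Option R),
          (js, (c, res)) ∈ Rules ∧
          r = ((js.take i).map liftJ ++ [((js[i]'hi).1, u)], (c, none))) }

/-- Ordered trees labelled in `L`: partial functions from positions (lists of
    child indices) to labels, with nonempty, prefix-closed,
    sibling-downward-closed domain. -/
structure OTree (L : Type) where
  label : List ℕ → Option L
  root_isSome : (label []).isSome
  pref : ∀ α n, (label (α ++ [n])).isSome → (label α).isSome
  sib : ∀ α n k, (label (α ++ [n])).isSome → k ≤ n → (label (α ++ [k])).isSome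

/-- A tree is an evaluation tree in a rule set: at every node, the ordered
    children labels together with the node label form a rule. -/
def IsTreeIn {L : Type} (Rules : Set (List L × L)) (t : OTree L) : Prop :=
  ∀ α l, t.label α = some l →
    ∃ ps : List L, (∀ i : ℕ, t.label (α ++ [i]) = ps[i]?) ∧ (ps, l) ∈ Rules

/-- Partial evaluation trees: evaluation trees in `Rules_?`. -/
def IsPET {C R : Type} (Rules : Set (List (C × R) × (C × R)))
    (t : OTree (Judg C R)) : Prop :=
  IsTreeIn (RulesQ Rules) t

/-- The refinement relation `⊑` on trees labelled by possibly-incomplete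
    judgements. -/
def TreeLE {C R : Type} (t t' : OTree (Judg C R)) : Prop :=
  (∀ α, (t.label α).isSome → (t'.label α).isSome) ∧
  ∀ α c u, t.label α = some (c, u) →
    (∃ (u' : Option R), t'.label α = some (c, u')) ∧
    (u.isSome → ∀ β, t.label (α ++ β) = t'.label (α ++ β))

/-- Strict refinement `⊏`. -/
def TreeLT {C R : Type} (t t' : OTree (Judg C R)) : Prop :=
  TreeLE t t' ∧ t ≠ t'

/-- A tree is finite if its domain is finite. -/
def TreeFinite {L : Type} (t : OTree L) : Prop :=
  Set.Finite {α | (t.label α).isSome}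

/-- Well-formedness: every subtree rooted at a complete node is finite. -/
def WellFormed {C R : Type} (t : OTree (Judg C R)) : Prop :=
  ∀ α c r, t.label α = some (c, some r) →
    Set.Finite {β | (t.label (α ++ β)).isSome}

/-- `t` is a least upper bound of the sequence `f` w.r.t. `⊑`. -/
def IsLubSeq {C R : Type} (f : ℕ → OTree (Judg C R)) (t : OTree (Judg C R)) : Prop :=
  (∀ n, TreeLE (f n) t) ∧ ∀ t', (∀ n, TreeLE (f n) t') → TreeLE t t'

/-- Inductive derivability in a rule set with finite-list premises. -/
inductive IndDerives {J : Type} (Rules : Set (List J × J)) : J → Prop where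
  | node (ps : List J) (j : J) : (ps, j) ∈ Rules →
      (∀ p ∈ ps, IndDerives Rules p) → IndDerives Rules j

/-- A set of judgements is consistent w.r.t. a rule set. -/
def ConsistentL {J : Type} (Rules : Set (List J × J)) (X : Set J) : Prop :=
  ∀ j ∈ X, ∃ (ps : List J), (ps, j) ∈ Rules ∧ ∀ p ∈ ps, p ∈ X

/-- Coinductive derivability: membership in some consistent set. -/
def CoDerives {J : Type} (Rules : Set (List J × J)) (j : J) : Prop :=
  ∃ (X : Set J), ConsistentL Rules X ∧ j ∈ X

/-- Derivability in a generalised inference system (rules + corules):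
    membership in a consistent set all of whose elements have a finite
    derivation using both rules and corules. -/
def GenDerives {J : Type} (rules corules : Set (List J × J)) (j : J) : Prop :=
  ∃ (X : Set J), ConsistentL rules X ∧ (∀ x ∈ X, IndDerives (rules ∪ corules) x) ∧ j ∈ X
/-- Trace results: a finite trace paired with a result, or an infinite trace. -/
abbrev TrRes (C R : Type) := (List C × R) ⊕ Stream' C

/-- The trace-extended rule set `Rules_tr`: finite-trace rules and
    infinite-trace rules. -/
def RulesTr {C R : Type} (Rules : Set (List (C × R) × (C × R))) :
    Set (List (C × TrRes C R) × (C × TrRes C R)) :=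
  { r | (∃ (js : List (C × R)) (c : C) (res : R) (σs : List (List C)),
          (js, (c, res)) ∈ Rules ∧ σs.length = js.length ∧
          r = ((js.zip σs).map (fun p => (p.1.1, Sum.inl (p.2, p.1.2))),
               (c, Sum.inl (c :: σs.flatten, res))))
      ∨ (∃ (js : List (C × R)) (c : C) (res : R) (i : ℕ) (hi : i < js.length)
            (σs : List (List C)) (σ : Stream' C),
          (js, (c, res)) ∈ Rules ∧ σs.length = i ∧
          r = (((js.take i).zip σs).map (fun p => (p.1.1, Sum.inl (p.2, p.1.2))) ++
                 [((js[i]'hi).1, Sum.inr σ)],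
               (c, Sum.inr ((c :: σs.flatten) ++ₛ σ)))) }

/-- Equality of rules up to an index `i`: same conclusion configuration, same
    first `i` premises, same configuration in the `(i+1)`-th premise
    (`i` is 0-based here), with a prescribed result `r'` in that premise. -/
def AgreeUpTo {C R : Type} (Rules : Set (List (C × R) × (C × R)))
    (js : List (C × R)) (c : C) (i : ℕ) (hi : i < js.length) (r' : R) : Prop :=
  ∃ (js' : List (C × R)) (res' : R) (hi' : i < js'.length),
    (js', (c, res')) ∈ Rules ∧ js'.take i = js.take i ∧
    (js'[i]'hi').1 = (js[i]'hi).1 ∧ (js'[i]'hi').2 = r'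

/-- The wrong-extended rule set `Rules_wr` over results `R + {wrong}`
    (`none` stands for `wrong`): original rules, wrong-configuration axioms,
    wrong-result rules and wrong-propagation rules. -/
def RulesWr {C R : Type} (Rules : Set (List (C × R) × (C × R))) :
    Set (List (Judg C R) × Judg C R) :=
  { r | (∃ (js : List (C × R)) (c : C) (res : R),
          (js, (c, res)) ∈ Rules ∧ r = (js.map liftJ, (c, some res)))
      ∨ (∃ (c : C), (¬ ∃ (js : List (C × R)) (res : R), (js, (c, res)) ∈ Rules) ∧
          r = ([], (c, none)))
      ∨ (∃ (js : List (C × R)) (c : C) (res : R) (i : ℕ) (hi : i < js.length) (r' : R),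
          (js, (c, res)) ∈ Rules ∧ ¬ AgreeUpTo Rules js c i hi r' ∧
          r = ((js.take i).map liftJ ++ [((js[i]'hi).1, some r')], (c, none)))
      ∨ (∃ (js : List (C × R)) (c : C) (res : R) (i : ℕ) (hi : i < js.length),
          (js, (c, res)) ∈ Rules ∧
          r = ((js.take i).map liftJ ++ [((js[i]'hi).1, none)], (c, none))) }

/-- The divergence-extended rule set `Rules_∞` over results `R + {∞}`
    (`none` stands for `∞`): original rules plus divergence-propagation
    rules. -/
def RulesInf {C R : Type} (Rules : Set (List (C × R) × (C × R))) :
    Set (List (Judg C R) × Judg C R) :=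
  { r | (∃ (js : List (C × R)) (c : C) (res : R),
          (js, (c, res)) ∈ Rules ∧ r = (js.map liftJ, (c, some res)))
      ∨ (∃ (js : List (C × R)) (c : C) (res : R) (i : ℕ) (hi : i < js.length),
          (js, (c, res)) ∈ Rules ∧
          r = ((js.take i).map liftJ ++ [((js[i]'hi).1, none)], (c, none))) }

/-- The coaxioms for divergence: `c ⇒ ∞` for every configuration `c`. -/
def CoAx (C R : Type) : Set (List (Judg C R) × Judg C R) :=
  { r | ∃ (c : C), r = ([], (c, none)) }

/-- The trace-forgetting map: `(σ, r) ↦ r` and `σ^∞ ↦ ∞`. -/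
def uForget {C R : Type} : TrRes C R → Option R :=
  Sum.elim (fun p => some p.2) (fun _ => none)

/-!
For each `c ∈ S` fix the rule given by the hypothesis. The premises before the distinguished one
are inductively derivable, so by induction on their derivations they have finite traces, say with
concatenation `σ`, while the distinguished premise `c'` is again in `S`. Unfolding this choice
corecursively gives infinite traces with `τ c = (c :: σ) ++ τ c'`, which is exactly what the
divergence-propagation rule of `Rules_tr` requires; hence the judgements `c ⇒ τ c` for `c ∈ S`,
together with the inductively derivable ones, form a consistent set.
-/

theorem List.exists_forall₂_of_forall_exists {α β : Type*} {P : α → β → Prop} {l : List α}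
    (h : ∀ a ∈ l, ∃ b, P a b) : ∃ l' : List β, List.Forall₂ P l l' := by
  induction l with
  | nil => exact ⟨[], .nil⟩
  | cons a l ih =>
    obtain ⟨b, hb⟩ := h a List.mem_cons_self
    obtain ⟨l', hl'⟩ := ih fun x hx => h x (List.mem_cons_of_mem _ hx)
    exact ⟨b :: l', .cons hb hl'⟩

theorem Stream'.exists_eq_cons_append {α β : Type*} (head : β → α) (tail : β → List α)
    (next : β → β) : ∃ τ : β → Stream' α, ∀ b, τ b = (head b :: tail b) ++ₛ τ (next b) := by
  -- The state is the rest of the current block together with the element owning the next block.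
  let out : List α × β → α := fun p => p.1.headD (head p.2)
  let step : List α × β → List α × β := fun p => match p.1 with
    | [] => (tail p.2, next p.2)
    | _ :: rest => (rest, p.2)
  have flush : ∀ (buf : List α) (b : β),
      Stream'.corec out step (buf, b) = buf ++ₛ Stream'.corec out step ([], b) := by
    intro buf b
    induction buf with
    | nil => rw [Stream'.nil_append_stream]
    | cons x rest ih => rw [Stream'.corec_eq, Stream'.cons_append_stream, ← ih]; rfl
  refine ⟨fun b => Stream'.corec out step ([], b), fun b => ?_⟩
  dsimp only
  rw [Stream'.corec_eq, Stream'.cons_append_stream]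
  exact congrArg _ (flush _ _)

/-- Coinduction up to inductive derivability. -/
theorem CoDerives.of_forall_mem {J : Type} {Rules : Set (List J × J)} {Y : Set J}
    (hY : ∀ j ∈ Y, ∃ ps : List J, (ps, j) ∈ Rules ∧ ∀ p ∈ ps, IndDerives Rules p ∨ p ∈ Y) :
    ∀ j ∈ Y, CoDerives Rules j := by
  refine fun j hj => ⟨{j | IndDerives Rules j} ∪ Y, ?_, Or.inr hj⟩
  rintro j (⟨ps, j, hr, hps⟩ | hj)
  · exact ⟨ps, hr, fun p hp => Or.inl (hps p hp)⟩
  · exact hY j hj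

section Traces

variable {C R : Type} {Rules : Set (List (C × R) × (C × R))}

theorem indDerives_of_mem_map_zip {js : List (C × R)} {σs : List (List C)}
    (hσs : List.Forall₂ (fun j σ => IndDerives (RulesTr Rules) (j.1, Sum.inl (σ, j.2))) js σs) :
    ∀ p ∈ (js.zip σs).map (fun p => (p.1.1, Sum.inl (p.2, p.1.2))),
      IndDerives (RulesTr Rules) p := by
  simp only [List.mem_map]
  rintro _ ⟨⟨j, σ⟩, hjσ, rfl⟩
  exact List.forall₂_zip hσs hjσ

theorem IndDerives.exists_trace {j : C × R} (hj : IndDerives Rules j) :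
    ∃ σ : List C, IndDerives (RulesTr Rules) (j.1, Sum.inl (σ, j.2)) := by
  induction hj with
  | node js j hr _ ih =>
    obtain ⟨σs, hσs⟩ := List.exists_forall₂_of_forall_exists ih
    exact ⟨j.1 :: σs.flatten, .node _ _ (Or.inl ⟨js, j.1, j.2, σs, hr, hσs.length_eq.symm, rfl⟩)
      (indDerives_of_mem_map_zip hσs)⟩

theorem exists_forall₂_traces {js : List (C × R)} (hjs : ∀ j ∈ js, IndDerives Rules j) :
    ∃ σs : List (List C),
      List.Forall₂ (fun j σ => IndDerives (RulesTr Rules) (j.1, Sum.inl (σ, j.2))) js σs :=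
  List.exists_forall₂_of_forall_exists fun j hj => (hjs j hj).exists_trace

end Traces

theorem trace_divergence_principle {C R : Type}
    (Rules : Set (List (C × R) × (C × R))) (S : Set C)
    (h : ∀ c ∈ S, ∃ (js : List (C × R)) (res : R) (i : ℕ) (hi : i < js.length),
      (js, (c, res)) ∈ Rules ∧
      (∀ (k : ℕ) (hk : k < i), IndDerives Rules (js[k]'(Nat.lt_trans hk hi))) ∧
      (js[i]'hi).1 ∈ S) :
    ∀ c ∈ S, ∃ σ : Stream' C, CoDerives (RulesTr Rules) (c, Sum.inr σ) := by
  choose js res i hi hrule hind hnext using fun s : S => h s s.2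
  choose σs hσs using fun s : S => exists_forall₂_traces (Rules := Rules) (js := (js s).take (i s))
    (List.forall_mem_iff_getElem.2 fun k hk => by
      simpa only [List.getElem_take] using hind s k (by rw [List.length_take] at hk; exact (lt_min_iff.1 hk).1))
  obtain ⟨τ, hτ⟩ := Stream'.exists_eq_cons_append (fun s : S => (s : C)) (fun s => (σs s).flatten)
    (fun s => ⟨((js s)[i s]'(hi s)).1, hnext s⟩)
  refine fun c hc => ⟨τ ⟨c, hc⟩, CoDerives.of_forall_mem
    (Y := Set.range fun s : S => ((s : C), Sum.inr (τ s))) ?_ _ ⟨⟨c, hc⟩, rfl⟩⟩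
  rintro _ ⟨s, rfl⟩
  have hlen : (σs s).length = i s := by
    rw [← (hσs s).length_eq, List.length_take, min_eq_left (hi s).le]
  refine ⟨_, Or.inr ⟨js s, s, res s, i s, hi s, σs s, _, hrule s, hlen, by rw [← hτ s]⟩, ?_⟩
  simp only [List.mem_append, List.mem_singleton]
  rintro p (hp | rfl)
  · exact Or.inl (indDerives_of_mem_map_zip (hσs s) p hp)
  · exact Or.inr ⟨⟨_, hnext s⟩, rfl⟩
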